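/- Let N ≥ 1 be an integer, let h : ℝ → ℝ be continuous with H(t) = ∫_0^t h(τ) dτ, and let v : ℝ^N → ℝ be continuously differentiable with compact support. Then for every t > 0, Ψ(v) = Ψ(v_t) + ((1 − t^(N+2))/(N + 2)) 𝒢(v) + ∫_{ℝ^N} A(t,v)(x) dx + ∫_{ℝ^N} B(t,v)(x) dx, where A(t,v)(x) = (1/2)[(1 − t²(1 + 2 t^N f(v)²)/(1 + 2 f(v)²)) − ((1 − t^(N+2))/(N + 2))(2 + 2N f(v)²/(1 + 2 f(v)²))] |∇v(x)|² and B(t,v)(x) = −H(f(v)) + t^(−N) H(t^(N/2) f(v)) + (N(1 − t^(N+2))/(2(N + 2)))[h(f(v))f(v) − 2H(f(v))], all evaluated at v = v(x). -/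

import Mathlib

open MeasureTheory

noncomputable def g (s : ℝ) : ℝ := ∫ τ in (0:ℝ)..s, Real.sqrt (1 + 2 * τ ^ 2)
noncomputable def f : ℝ → ℝ := Function.invFun g

lemma sqrt_cont : Continuous fun τ : ℝ => Real.sqrt (1 + 2 * τ ^ 2) :=
  Real.continuous_sqrt.comp (by continuity)

lemma sqrt_pos' (s : ℝ) : 0 < Real.sqrt (1 + 2 * s ^ 2) :=
  Real.sqrt_pos.2 (by positivity)

lemma g_hasDerivAt (s : ℝ) : HasDerivAt g (Real.sqrt (1 + 2 * s ^ 2)) s :=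
  intervalIntegral.integral_hasDerivAt_right
    (sqrt_cont.intervalIntegrable _ _)
    (sqrt_cont.stronglyMeasurableAtFilter _ _)
    sqrt_cont.continuousAt

lemma g_cont : Continuous g := by
  have : Differentiable ℝ g := fun s => (g_hasDerivAt s).differentiableAt
  exact this.continuous

lemma g_strictMono : StrictMono g := by
  apply strictMono_of_deriv_pos
  intro s
  rw [(g_hasDerivAt s).deriv]
  exact sqrt_pos' s

lemma one_le_sqrt (s : ℝ) : 1 ≤ Real.sqrt (1 + 2 * s ^ 2) :=
  Real.one_le_sqrt.2 (by nlinarith [sq_nonneg s])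

lemma self_le_g (s : ℝ) (hs : 0 ≤ s) : s ≤ g s := by
  have h : (∫ τ in (0:ℝ)..s, (1:ℝ)) ≤ g s := by
    apply intervalIntegral.integral_mono_on hs (intervalIntegrable_const)
      (sqrt_cont.intervalIntegrable _ _)
    intro x _; exact one_le_sqrt x
  simpa using h

lemma g_le_self (s : ℝ) (hs : s ≤ 0) : g s ≤ s := by
  have h1 : g s = -∫ τ in s..(0:ℝ), Real.sqrt (1 + 2 * τ ^ 2) := by
    rw [← intervalIntegral.integral_symm]; rfl
  have h2 : (-s:ℝ) ≤ ∫ τ in s..(0:ℝ), Real.sqrt (1 + 2 * τ ^ 2) := by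
    have : (-s:ℝ) = ∫ τ in s..(0:ℝ), (1:ℝ) := by simp
    rw [this]
    apply intervalIntegral.integral_mono_on hs intervalIntegrable_const
      (sqrt_cont.intervalIntegrable _ _)
    intro x _; exact one_le_sqrt x
  linarith [h1, h2]

lemma g_surj : Function.Surjective g := by
  intro y
  have h1 : g (min y 0) ≤ y := le_trans (g_le_self _ (min_le_right y 0)) (min_le_left y 0)
  have h2 : y ≤ g (max y 0) := le_trans (le_max_left y 0) (self_le_g _ (le_max_right y 0))
  obtain ⟨x, _, hx⟩ := intermediate_value_Icc (min_le_max (a := y) (b := 0))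
    g_cont.continuousOn (Set.mem_Icc.2 ⟨h1, h2⟩)
  exact ⟨x, hx⟩

lemma g_inj : Function.Injective g := g_strictMono.injective

lemma f_g (s : ℝ) : f (g s) = s := Function.leftInverse_invFun g_inj s

lemma g_f (y : ℝ) : g (f y) = y := Function.rightInverse_invFun g_surj y

lemma g_zero : g 0 = 0 := intervalIntegral.integral_same

lemma f_zero : f 0 = 0 := by have := f_g 0; rwa [g_zero] at this

lemma invFun_f_eq : Function.invFun f = g := by
  funext z
  have hfs : Function.Surjective f := fun s => ⟨g s, f_g s⟩
  have hfi : Function.Injective f := Function.LeftInverse.injective g_f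
  have h1 : f (Function.invFun f z) = z := Function.invFun_eq (hfs z)
  have h2 : f (g z) = z := f_g z
  exact hfi (h1.trans h2.symm)

lemma f_cont : Continuous f := by
  have e : ℝ ≃o ℝ := StrictMono.orderIsoOfSurjective g g_strictMono g_surj
  have : f = (StrictMono.orderIsoOfSurjective g g_strictMono g_surj).symm := by
    funext y
    apply g_inj
    rw [g_f]
    exact (StrictMono.orderIsoOfSurjective g g_strictMono g_surj).apply_symm_apply y |>.symm
  rw [this]
  exact OrderIso.continuous _

lemma f_hasDerivAt (y : ℝ) :
    HasDerivAt f (Real.sqrt (1 + 2 * (f y) ^ 2))⁻¹ y := by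
  apply HasDerivAt.of_local_left_inverse (f_cont.continuousAt)
    (g_hasDerivAt (f y)) (sqrt_pos' (f y)).ne'
  exact Filter.Eventually.of_forall g_f

noncomputable def stretch {N : ℕ} (t : ℝ) (v : EuclideanSpace ℝ (Fin N) → ℝ) :
    EuclideanSpace ℝ (Fin N) → ℝ :=
  fun x => Function.invFun f (t ^ ((N:ℝ) / 2) * f (v (t • x)))

lemma stretch_eq {N : ℕ} (t : ℝ) (v : EuclideanSpace ℝ (Fin N) → ℝ) :
    stretch t v = fun x => g (t ^ ((N:ℝ) / 2) * f (v (t • x))) := by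
  funext x; simp only [stretch, invFun_f_eq]

lemma rpow_half_sq {N : ℕ} {t : ℝ} (ht : 0 < t) :
    (t ^ ((N:ℝ) / 2)) ^ 2 = t ^ N := by
  rw [← Real.rpow_natCast (t ^ ((N:ℝ)/2)) 2, ← Real.rpow_mul ht.le]
  norm_num

lemma grad_stretch {N : ℕ} {t : ℝ} (ht : 0 < t) (v : EuclideanSpace ℝ (Fin N) → ℝ)
    (hv : Differentiable ℝ v) (x : EuclideanSpace ℝ (Fin N)) :
    ‖gradient (stretch t v) x‖ ^ 2
      = t ^ 2 * t ^ N * ((1 + 2 * t ^ N * (f (v (t • x))) ^ 2)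
          / (1 + 2 * (f (v (t • x))) ^ 2)) * ‖gradient v (t • x)‖ ^ 2 := by
  set y := t • x with hy
  set s := f (v y) with hs
  set φ := t ^ ((N:ℝ) / 2) with hφ
  -- derivative of x ↦ t • x
  have h0 : HasFDerivAt (fun x : EuclideanSpace ℝ (Fin N) => t • x)
      (t • ContinuousLinearMap.id ℝ (EuclideanSpace ℝ (Fin N))) x :=
    (hasFDerivAt_id x).const_smul t
  have h1 : HasFDerivAt (fun x : EuclideanSpace ℝ (Fin N) => v (t • x))
      (t • fderiv ℝ v y) x := by
    have := ((hv y).hasFDerivAt).comp x h0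
    rwa [ContinuousLinearMap.comp_smul, ContinuousLinearMap.comp_id] at this
  have h2 : HasDerivAt (fun u : ℝ => φ * f u) (φ * (Real.sqrt (1 + 2 * s ^ 2))⁻¹) (v y) :=
    (f_hasDerivAt (v y)).const_mul φ
  have h4 : HasFDerivAt (fun x : EuclideanSpace ℝ (Fin N) => φ * f (v (t • x)))
      ((φ * (Real.sqrt (1 + 2 * s ^ 2))⁻¹) • (t • fderiv ℝ v y)) x :=
    by have := h2.comp_hasFDerivAt x h1; exact this
  have h5 : HasFDerivAt (stretch t v)
      ((Real.sqrt (1 + 2 * (φ * s) ^ 2)) •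
        ((φ * (Real.sqrt (1 + 2 * s ^ 2))⁻¹) • (t • fderiv ℝ v y))) x := by
    rw [stretch_eq]
    exact (g_hasDerivAt (φ * s)).comp_hasFDerivAt x h4
  set c := Real.sqrt (1 + 2 * (φ * s) ^ 2) * ((φ * (Real.sqrt (1 + 2 * s ^ 2))⁻¹) * t) with hc
  have h6 : fderiv ℝ (stretch t v) x = c • fderiv ℝ v y := by
    rw [h5.fderiv, smul_smul, smul_smul, hc, mul_assoc]
  have h7 : gradient (stretch t v) x = c • gradient v y := by
    unfold gradient
    rw [h6]
    exact (InnerProductSpace.toDual ℝ _).symm.map_smul c _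
  rw [h7, norm_smul, mul_pow, Real.norm_eq_abs, sq_abs]
  have hφ2 : φ ^ 2 = t ^ N := rpow_half_sq ht
  have hd : (0:ℝ) < 1 + 2 * s ^ 2 := by positivity
  have hc2 : c ^ 2 = t ^ 2 * t ^ N * ((1 + 2 * t ^ N * s ^ 2) / (1 + 2 * s ^ 2)) := by
    rw [hc]
    rw [mul_pow, mul_pow, mul_pow, Real.sq_sqrt (by positivity), mul_pow, hφ2]
    rw [← Real.sqrt_inv, Real.sq_sqrt (by positivity)]
    field_simp
  rw [hc2]

lemma f_stretch {N : ℕ} (t : ℝ) (v : EuclideanSpace ℝ (Fin N) → ℝ)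
    (x : EuclideanSpace ℝ (Fin N)) :
    f (stretch t v x) = t ^ ((N:ℝ) / 2) * f (v (t • x)) := by
  rw [stretch_eq]; exact f_g _

section main
variable {N : ℕ} (v : EuclideanSpace ℝ (Fin N) → ℝ)

lemma grad_cont (hv : ContDiff ℝ 1 v) : Continuous (gradient v) := by
  unfold gradient
  exact (InnerProductSpace.toDual ℝ _).symm.continuous.comp (hv.continuous_fderiv one_ne_zero)

lemma grad_supp (hsupp : HasCompactSupport v) : HasCompactSupport (gradient v) := by
  unfold gradient
  exact (hsupp.fderiv ℝ).comp_left (map_zero _)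

lemma int_comp (hv : ContDiff ℝ 1 v) (hsupp : HasCompactSupport v)
    (φ : ℝ → ℝ) (hφ : Continuous φ) (hφ0 : φ 0 = 0) :
    Integrable (fun x => φ (v x)) := by
  exact (hφ.comp hv.continuous).integrable_of_hasCompactSupport (hsupp.comp_left hφ0)

set_option maxHeartbeats 1000000 in
lemma int_gradsq (hv : ContDiff ℝ 1 v) (hsupp : HasCompactSupport v) :
    Integrable (fun x => ‖gradient v x‖ ^ 2) := by
  have hcs : HasCompactSupport (fun x => ‖gradient v x‖ ^ 2) :=
    (grad_supp v hsupp).comp_left (g := fun z => ‖z‖ ^ 2) (by simp)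
  exact ((grad_cont v hv).norm.pow 2).integrable_of_hasCompactSupport hcs

set_option maxHeartbeats 1000000 in
lemma int_wgradsq (hv : ContDiff ℝ 1 v) (hsupp : HasCompactSupport v)
    (w : ℝ → ℝ) (hw : Continuous w) :
    Integrable (fun x => w (v x) * ‖gradient v x‖ ^ 2) := by
  have hcs : HasCompactSupport (fun x => ‖gradient v x‖ ^ 2) :=
    (grad_supp v hsupp).comp_left (g := fun z => ‖z‖ ^ 2) (by simp)
  exact ((hw.comp hv.continuous).mul ((grad_cont v hv).norm.pow 2)).integrable_of_hasCompactSupport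
    (HasCompactSupport.mul_left hcs)

end main

noncomputable def Psi {N : ℕ} (H : ℝ → ℝ) (v : EuclideanSpace ℝ (Fin N) → ℝ) : ℝ :=
  (1 / 2) * (∫ x : EuclideanSpace ℝ (Fin N), ‖gradient v x‖ ^ 2)
    - ∫ x : EuclideanSpace ℝ (Fin N), H (f (v x))

noncomputable def Gfun {N : ℕ} (h H : ℝ → ℝ) (v : EuclideanSpace ℝ (Fin N) → ℝ) : ℝ :=
  (∫ x : EuclideanSpace ℝ (Fin N), ‖gradient v x‖ ^ 2)
    + (N:ℝ) / 2 * (∫ x : EuclideanSpace ℝ (Fin N),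
        (2 * (f (v x)) ^ 2 / (1 + 2 * (f (v x)) ^ 2)) * ‖gradient v x‖ ^ 2)
    - (N:ℝ) / 2 * (∫ x : EuclideanSpace ℝ (Fin N),
        (h (f (v x)) * f (v x) - 2 * H (f (v x))))

lemma int_comb {N : ℕ} (g1 g2 : EuclideanSpace ℝ (Fin N) → ℝ)
    (h1 : Integrable g1) (h2 : Integrable g2) (a b : ℝ) :
    ∫ x, (a * g1 x + b * g2 x) = a * (∫ x, g1 x) + b * ∫ x, g2 x := by
  rw [integral_add (h1.const_mul a) (h2.const_mul b), integral_const_mul, integral_const_mul]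

lemma int_comb3 {N : ℕ} (g1 g2 g3 : EuclideanSpace ℝ (Fin N) → ℝ)
    (h1 : Integrable g1) (h2 : Integrable g2) (h3 : Integrable g3) (a b c : ℝ) :
    ∫ x, (a * g1 x + b * g2 x + c * g3 x)
      = a * (∫ x, g1 x) + b * (∫ x, g2 x) + c * ∫ x, g3 x := by
  have h12 : Integrable (fun x => a * g1 x + b * g2 x) :=
    (h1.const_mul a).add (h2.const_mul b)
  rw [integral_add h12 (h3.const_mul c), int_comb g1 g2 h1 h2 a b, integral_const_mul]

/-- The decomposition `Ψ(v) = Ψ(v_t) + ((1 − t^{N+2})/(N+2)) 𝒢(v) + ∫ A(t,v) + ∫ B(t,v)`. -/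
theorem stmt_5 (N : ℕ) (hN : 1 ≤ N) (h H : ℝ → ℝ) (hcont : Continuous h)
    (hH : ∀ s : ℝ, H s = ∫ τ in (0:ℝ)..s, h τ)
    (v : EuclideanSpace ℝ (Fin N) → ℝ) (hv : ContDiff ℝ 1 v)
    (hsupp : HasCompactSupport v) (t : ℝ) (ht : 0 < t) :
    Psi H v
      = Psi H (stretch t v) + ((1 - t ^ (N + 2)) / ((N:ℝ) + 2)) * Gfun h H v
        + (∫ x : EuclideanSpace ℝ (Fin N),
            (1 / 2) * ((1 - t ^ 2 * (1 + 2 * t ^ N * (f (v x)) ^ 2) / (1 + 2 * (f (v x)) ^ 2))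
              - ((1 - t ^ (N + 2)) / ((N:ℝ) + 2))
                  * (2 + 2 * (N:ℝ) * (f (v x)) ^ 2 / (1 + 2 * (f (v x)) ^ 2)))
              * ‖gradient v x‖ ^ 2)
        + ∫ x : EuclideanSpace ℝ (Fin N),
            (-H (f (v x)) + t ^ (-(N:ℝ)) * H (t ^ ((N:ℝ) / 2) * f (v x))
              + ((N:ℝ) * (1 - t ^ (N + 2)) / (2 * ((N:ℝ) + 2)))
                  * (h (f (v x)) * f (v x) - 2 * H (f (v x)))) := by
  have HC : Continuous H := by
    have : H = fun s => ∫ τ in (0:ℝ)..s, h τ := funext hH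
    rw [this]
    exact intervalIntegral.continuous_primitive (fun a b => hcont.intervalIntegrable a b) 0
  have H0 : H 0 = 0 := by rw [hH]; simp
  set T : ℝ := t ^ N with hTdef
  have hT : (0:ℝ) < T := pow_pos ht N
  set φt : ℝ := t ^ ((N:ℝ) / 2) with hφdef
  set c : ℝ := (1 - t ^ (N + 2)) / ((N:ℝ) + 2) with hcdef
  set w : ℝ → ℝ := fun z => 2 * (f z) ^ 2 / (1 + 2 * (f z) ^ 2) with hwdef
  have hw_cont : Continuous w := by
    apply Continuous.div
    · exact continuous_const.mul (f_cont.pow 2)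
    · exact continuous_const.add (continuous_const.mul (f_cont.pow 2))
    · intro z; positivity
  set K : ℝ := ∫ x : EuclideanSpace ℝ (Fin N), ‖gradient v x‖ ^ 2 with hKdef
  set K2 : ℝ := ∫ x : EuclideanSpace ℝ (Fin N), w (v x) * ‖gradient v x‖ ^ 2 with hK2def
  set P : ℝ := ∫ x : EuclideanSpace ℝ (Fin N),
      (h (f (v x)) * f (v x) - 2 * H (f (v x))) with hPdef
  set Q : ℝ := ∫ x : EuclideanSpace ℝ (Fin N), H (f (v x)) with hQdef
  set R : ℝ := ∫ x : EuclideanSpace ℝ (Fin N), H (φt * f (v x)) with hRdef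
  have intG := int_gradsq v hv hsupp
  have intWG := int_wgradsq v hv hsupp w hw_cont
  have intQ : Integrable (fun x => H (f (v x))) :=
    int_comp v hv hsupp (fun z => H (f z)) (HC.comp f_cont) (by beta_reduce; rw [f_zero, H0])
  have intR : Integrable (fun x => H (φt * f (v x))) :=
    int_comp v hv hsupp (fun z => H (φt * f z))
      (HC.comp (continuous_const.mul f_cont)) (by beta_reduce; rw [f_zero, mul_zero, H0])
  have intP : Integrable (fun x => h (f (v x)) * f (v x) - 2 * H (f (v x))) :=
    int_comp v hv hsupp (fun z => h (f z) * f z - 2 * H (f z))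
      (((hcont.comp f_cont).mul f_cont).sub (continuous_const.mul (HC.comp f_cont)))
      (by beta_reduce; rw [f_zero, H0]; ring)
  have hdpos : ∀ z : ℝ, (0:ℝ) < 1 + 2 * (f z) ^ 2 := fun z => by positivity
  -- kinetic term of the stretched function
  have hGS : (∫ x : EuclideanSpace ℝ (Fin N), ‖gradient (stretch t v) x‖ ^ 2)
      = T⁻¹ * (t ^ 2 * T * K + t ^ 2 * T * (T - 1) * K2) := by
    have e1 : ∀ x : EuclideanSpace ℝ (Fin N), ‖gradient (stretch t v) x‖ ^ 2
        = (fun y => t ^ 2 * T * ((1 + 2 * T * (f (v y)) ^ 2) / (1 + 2 * (f (v y)) ^ 2))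
            * ‖gradient v y‖ ^ 2) (t • x) :=
      fun x => grad_stretch ht v (hv.differentiable one_ne_zero) x
    rw [integral_congr_ae (Filter.Eventually.of_forall e1)]
    rw [Measure.integral_comp_smul_of_nonneg volume
      (fun y => t ^ 2 * T * ((1 + 2 * T * (f (v y)) ^ 2) / (1 + 2 * (f (v y)) ^ 2))
          * ‖gradient v y‖ ^ 2) t (hR := ht.le)]
    rw [finrank_euclideanSpace_fin, smul_eq_mul]
    congr 1
    have e2 : (fun y : EuclideanSpace ℝ (Fin N) =>
        t ^ 2 * T * ((1 + 2 * T * (f (v y)) ^ 2) / (1 + 2 * (f (v y)) ^ 2))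
          * ‖gradient v y‖ ^ 2)
        = fun y => (t ^ 2 * T) * ‖gradient v y‖ ^ 2
            + (t ^ 2 * T * (T - 1)) * (w (v y) * ‖gradient v y‖ ^ 2) := by
      funext y
      have hd := (hdpos (v y)).ne'
      rw [hwdef]
      field_simp
      ring
    rw [e2, int_comb _ _ intG intWG]
  -- potential term of the stretched function
  have hHS : (∫ x : EuclideanSpace ℝ (Fin N), H (f (stretch t v x))) = T⁻¹ * R := by
    have e1 : ∀ x : EuclideanSpace ℝ (Fin N), H (f (stretch t v x))
        = (fun y => H (φt * f (v y))) (t • x) := fun x => by rw [f_stretch]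
    rw [integral_congr_ae (Filter.Eventually.of_forall e1)]
    rw [Measure.integral_comp_smul_of_nonneg volume (fun y => H (φt * f (v y))) t (hR := ht.le)]
    rw [finrank_euclideanSpace_fin, smul_eq_mul, hRdef]
  -- the A integral
  have hA : (∫ x : EuclideanSpace ℝ (Fin N),
        (1 / 2) * ((1 - t ^ 2 * (1 + 2 * t ^ N * (f (v x)) ^ 2) / (1 + 2 * (f (v x)) ^ 2))
          - c * (2 + 2 * (N:ℝ) * (f (v x)) ^ 2 / (1 + 2 * (f (v x)) ^ 2)))
          * ‖gradient v x‖ ^ 2)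
      = (1/2 - t^2/2 - c) * K + (t^2/2 - t^(N+2)/2 - c*(N:ℝ)/2) * K2 := by
    have e2 : (fun x : EuclideanSpace ℝ (Fin N) =>
        (1 / 2) * ((1 - t ^ 2 * (1 + 2 * t ^ N * (f (v x)) ^ 2) / (1 + 2 * (f (v x)) ^ 2))
          - c * (2 + 2 * (N:ℝ) * (f (v x)) ^ 2 / (1 + 2 * (f (v x)) ^ 2)))
          * ‖gradient v x‖ ^ 2)
        = fun x => (1/2 - t^2/2 - c) * ‖gradient v x‖ ^ 2
            + (t^2/2 - t^(N+2)/2 - c*(N:ℝ)/2) * (w (v x) * ‖gradient v x‖ ^ 2) := by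
      funext x
      have hd := (hdpos (v x)).ne'
      rw [hwdef]
      field_simp
      ring
    rw [e2, int_comb _ _ intG intWG]
  -- the B integral
  have htN : t ^ (-(N:ℝ)) = T⁻¹ := by
    rw [Real.rpow_neg ht.le, Real.rpow_natCast, hTdef]
  have hB : (∫ x : EuclideanSpace ℝ (Fin N),
        (-H (f (v x)) + t ^ (-(N:ℝ)) * H (φt * f (v x))
          + ((N:ℝ) * (1 - t ^ (N + 2)) / (2 * ((N:ℝ) + 2)))
              * (h (f (v x)) * f (v x) - 2 * H (f (v x)))))
      = -Q + T⁻¹ * R + ((N:ℝ) * (1 - t ^ (N + 2)) / (2 * ((N:ℝ) + 2))) * P := by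
    rw [htN]
    have e : (fun x : EuclideanSpace ℝ (Fin N) =>
        (-H (f (v x)) + T⁻¹ * H (φt * f (v x))
          + ((N:ℝ) * (1 - t ^ (N + 2)) / (2 * ((N:ℝ) + 2)))
              * (h (f (v x)) * f (v x) - 2 * H (f (v x)))))
        = fun x => ((-1) * H (f (v x)) + T⁻¹ * H (φt * f (v x))
          + ((N:ℝ) * (1 - t ^ (N + 2)) / (2 * ((N:ℝ) + 2)))
              * (h (f (v x)) * f (v x) - 2 * H (f (v x)))) := by
      funext x; ring
    rw [e, int_comb3 _ _ _ intQ intR intP]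
    ring
  -- assemble
  rw [Psi, Psi, Gfun, hGS, hHS, hA, hB]
  rw [← hKdef, ← hK2def, ← hPdef, ← hQdef]
  have hN2 : ((N:ℝ) + 2) ≠ 0 := by positivity
  rw [hcdef, hTdef]
  field_simp
  ring
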